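/- arXiv:2304.12581 — 7 statements merged into one kernel-verified Lean document; each statement's English description precedes it below -/
import Mathlib

section
/- Let H, f, a : ℝ^n × ℝ^n → ℝ be smooth functions with {f, H} = a·f (pointwise). Let γ : I → ℝ^n × ℝ^n be a smooth solution of Hamilton's equations for H on an open interval I, and suppose f(γ(t₀)) = 0 for some t₀ ∈ I. Then every iterated derivative of the function t ↦ f(γ(t)) vanishes at t = t₀, i.e. (d^k/dt^k)(f∘γ)(t₀) = 0 for all k ≥ 0. -/
open scoped BigOperators

/-- The `i`-th coordinate direction in the `q` (position) factor of phase space `ℝⁿ × ℝⁿ`. -/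
noncomputable def eQ (n : ℕ) (i : Fin n) : (Fin n → ℝ) × (Fin n → ℝ) :=
  (Pi.single i 1, 0)

/-- The `i`-th coordinate direction in the `p` (momentum) factor of phase space `ℝⁿ × ℝⁿ`. -/
noncomputable def eP (n : ℕ) (i : Fin n) : (Fin n → ℝ) × (Fin n → ℝ) :=
  (0, Pi.single i 1)

/-- The canonical Poisson bracket `{f,g} = Σᵢ (∂f/∂qⁱ ∂g/∂pᵢ − ∂f/∂pᵢ ∂g/∂qⁱ)` on `ℝⁿ × ℝⁿ`. -/
noncomputable def poissonBracket {n : ℕ} (f g : (Fin n → ℝ) × (Fin n → ℝ) → ℝ)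
    (x : (Fin n → ℝ) × (Fin n → ℝ)) : ℝ :=
  ∑ i : Fin n, (fderiv ℝ f x (eQ n i) * fderiv ℝ g x (eP n i)
    - fderiv ℝ f x (eP n i) * fderiv ℝ g x (eQ n i))

/-- The Hamiltonian vector field `X_f = (∂f/∂p₁,…,∂f/∂pₙ, −∂f/∂q¹,…,−∂f/∂qⁿ)` on `ℝⁿ × ℝⁿ`. -/
noncomputable def hamVF {n : ℕ} (f : (Fin n → ℝ) × (Fin n → ℝ) → ℝ)
    (x : (Fin n → ℝ) × (Fin n → ℝ)) : (Fin n → ℝ) × (Fin n → ℝ) :=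
  (fun i => fderiv ℝ f x (eP n i), fun i => - fderiv ℝ f x (eQ n i))

/-- Decomposition of a phase-space vector in the coordinate basis. -/
lemma phase_decomp {n : ℕ} (v w : Fin n → ℝ) :
    (v, w) = (∑ i, v i • eQ n i) + (∑ i, w i • eP n i) := by
  simp only [eQ, eP, Prod.ext_iff, Prod.fst_sum, Prod.snd_sum, Prod.smul_mk, Prod.fst_add,
    Prod.snd_add, smul_zero]
  constructor <;> · funext j; simp [Finset.sum_apply, Pi.single_apply]

/-- The differential of `f` applied to the Hamiltonian vector field of `H` is `{f, H}`. -/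
lemma fderiv_apply_hamVF {n : ℕ} (f H : (Fin n → ℝ) × (Fin n → ℝ) → ℝ)
    (x : (Fin n → ℝ) × (Fin n → ℝ)) :
    fderiv ℝ f x (hamVF H x) = poissonBracket f H x := by
  have hdec := phase_decomp (fun i => fderiv ℝ H x (eP n i))
    (fun i => - fderiv ℝ H x (eQ n i))
  rw [hamVF, hdec, map_add, map_sum, map_sum]
  simp only [map_smul, smul_eq_mul, poissonBracket]
  rw [← Finset.sum_add_distrib]
  exact Finset.sum_congr rfl fun i _ => by ring

/-- The auxiliary sequence of coefficient functions: `c 0 = 1`, `c (k+1) = c k' + c k * g`. -/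
noncomputable def cseq (g : ℝ → ℝ) : ℕ → ℝ → ℝ
  | 0 => fun _ => 1
  | k + 1 => fun t => deriv (cseq g k) t + cseq g k t * g t

lemma cseq_smooth (g : ℝ → ℝ) (s : Set ℝ) (hs : IsOpen s)
    (hg : ContDiffOn ℝ (⊤ : ℕ∞) g s) (k : ℕ) : ContDiffOn ℝ (⊤ : ℕ∞) (cseq g k) s := by
  induction k with
  | zero => exact contDiffOn_const
  | succ k ih =>
    exact (ih.deriv_of_isOpen hs (by simp)).add (ih.mul hg)

/-- If `{f,H} = a·f` pointwise and `γ` is a smooth solution of Hamilton's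
equations for `H` on an open interval with `f (γ t₀) = 0`, then every iterated derivative of
`t ↦ f (γ t)` vanishes at `t₀`. -/
theorem iteratedDeriv_particular_integral_eq_zero {n : ℕ}
    (H f a : (Fin n → ℝ) × (Fin n → ℝ) → ℝ)
    (hH : ContDiff ℝ (⊤ : ℕ∞) H) (hf : ContDiff ℝ (⊤ : ℕ∞) f) (ha : ContDiff ℝ (⊤ : ℕ∞) a)
    (hbracket : ∀ x, poissonBracket f H x = a x * f x)
    (t₁ t₂ : ℝ) (γ : ℝ → (Fin n → ℝ) × (Fin n → ℝ))
    (hγsmooth : ContDiffOn ℝ (⊤ : ℕ∞) γ (Set.Ioo t₁ t₂))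
    (hHam : ∀ t ∈ Set.Ioo t₁ t₂, HasDerivAt γ (hamVF H (γ t)) t)
    (t₀ : ℝ) (ht₀ : t₀ ∈ Set.Ioo t₁ t₂) (hzero : f (γ t₀) = 0) :
    ∀ k : ℕ, iteratedDeriv k (f ∘ γ) t₀ = 0 := by
  set I := Set.Ioo t₁ t₂ with hI
  have hIopen : IsOpen I := isOpen_Ioo
  set u : ℝ → ℝ := f ∘ γ with hu
  set g : ℝ → ℝ := a ∘ γ with hg
  -- ODE along the trajectory : u' = g * u on I
  have hu' : ∀ t ∈ I, HasDerivAt u (g t * u t) t := by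
    intro t ht
    have h1 : HasDerivAt u (fderiv ℝ f (γ t) (hamVF H (γ t))) t :=
      (hf.differentiable (by simp) (γ t)).hasFDerivAt.comp_hasDerivAt t (hHam t ht)
    rwa [fderiv_apply_hamVF, hbracket] at h1
  have hgsmooth : ContDiffOn ℝ (⊤ : ℕ∞) g I := ha.comp_contDiffOn hγsmooth
  have husmooth : ContDiffOn ℝ (⊤ : ℕ∞) u I := hf.comp_contDiffOn hγsmooth
  -- main claim: k-th derivative of u equals (cseq g k) * u on I
  have key : ∀ k : ℕ, ∀ t ∈ I, iteratedDeriv k u t = cseq g k t * u t := by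
    intro k
    induction k with
    | zero => intro t _; simp [cseq]
    | succ k ih =>
      intro t ht
      have heq : iteratedDeriv k u =ᶠ[nhds t] fun s => cseq g k s * u s :=
        Filter.eventuallyEq_of_mem (hIopen.mem_nhds ht) ih
      have hc : HasDerivAt (cseq g k) (deriv (cseq g k) t) t := by
        have := ((cseq_smooth g I hIopen hgsmooth k).contDiffAt
          (hIopen.mem_nhds ht)).differentiableAt (by simp)
        exact this.hasDerivAt
      have hprod : HasDerivAt (fun s => cseq g k s * u s)
          (deriv (cseq g k) t * u t + cseq g k t * (g t * u t)) t :=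
        hc.mul (hu' t ht)
      rw [iteratedDeriv_succ, heq.deriv_eq, hprod.deriv]
      simp only [cseq]
      ring
  intro k
  rw [key k t₀ ht₀, show u t₀ = 0 from hzero, mul_zero]
end

section
/- (Hamiltonian symmetry reduction by a particular integral in Darboux coordinates.) Let K, a : ℝ^n × ℝ^n → ℝ be smooth with {π_n, K} = a·π_n pointwise, where π_n(q,p) = p_n. Let γ(t) = (q(t), p(t)) be a solution of Hamilton's equations for K on an open interval I such that p_n(t) = 0 for all t ∈ I. Fix any c ∈ ℝ and define the reduced Hamiltonian K̄ : ℝ^{n−1} × ℝ^{n−1} → ℝ by K̄(q̄, p̄) = K(q̄¹,…,q̄^{n−1}, c, p̄₁,…,p̄_{n−1}, 0). Then the projected curve t ↦ (q¹(t),…,q^{n−1}(t), p₁(t),…,p_{n−1}(t)) is a solution of Hamilton's equations for K̄ on ℝ^{n−1} × ℝ^{n−1}. -/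
open scoped BigOperators

/-!
The bracket condition says `∂K/∂qⁿ = -{πₙ, K} = -a pₙ`, which vanishes on the hyperplane `pₙ = 0`;
so `K` is constant along the `qⁿ`-lines inside that hyperplane, and the reduced Hamiltonian
`K̄ = K ∘ ((q̄, p̄) ↦ (q̄, c, p̄, 0))` does not depend on `c`. At a time `t` we may therefore take
`c = qⁿ(t)`: the embedding then sends the projected point back to `γ(t)` (because `pₙ(t) = 0`), and
by the chain rule the Hamiltonian vector field of `K̄` there is the projection of `X_K(γ(t))`,
the velocity of the projected curve.
-/

namespace Fin

variable {n : ℕ} {α : Type*}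

theorem snoc_add_snoc [Add α] (x y : Fin n → α) (a b : α) :
    (snoc x a : Fin (n + 1) → α) + snoc y b = snoc (x + y) (a + b) := by
  funext j
  refine lastCases ?_ (fun i => ?_) j <;> simp

theorem smul_snoc {R : Type*} [SMul R α] (r : R) (x : Fin n → α) (a : α) :
    r • (snoc x a : Fin (n + 1) → α) = snoc (r • x) (r • a) := by
  funext j
  refine lastCases ?_ (fun i => ?_) j <;> simp

theorem snoc_zero_zero [Zero α] : (snoc (0 : Fin n → α) 0 : Fin (n + 1) → α) = 0 := by
  funext j
  refine lastCases ?_ (fun i => ?_) j <;> simp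

theorem snoc_single_zero [Zero α] (i : Fin n) (a : α) :
    (snoc (Pi.single i a) 0 : Fin (n + 1) → α) = Pi.single i.castSucc a := by
  funext j
  refine lastCases ?_ (fun k => ?_) j
  · simp [(castSucc_lt_last i).ne']
  · simp [Pi.single_apply, castSucc_inj]

noncomputable def snocZeroCLM (n : ℕ) : (Fin n → ℝ) →L[ℝ] (Fin (n + 1) → ℝ) :=
  LinearMap.toContinuousLinearMap
    { toFun := fun x => snoc x 0
      map_add' := fun x y => by simp [snoc_add_snoc]
      map_smul' := fun r x => by simp [smul_snoc] }

noncomputable def initCLM (n : ℕ) : (Fin (n + 1) → ℝ) →L[ℝ] (Fin n → ℝ) :=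
  ContinuousLinearMap.pi fun i => ContinuousLinearMap.proj i.castSucc

end Fin

abbrev PhaseSpace (m : ℕ) : Type := (Fin m → ℝ) × (Fin m → ℝ)

theorem poissonBracket_momentum_left {m : ℕ} (i : Fin m) (K : PhaseSpace m → ℝ)
    (x : PhaseSpace m) :
    poissonBracket (fun y => y.2 i) K x = -fderiv ℝ K x (eQ m i) := by
  have hπ : HasFDerivAt (fun y : PhaseSpace m => y.2 i)
      ((ContinuousLinearMap.proj i).comp (ContinuousLinearMap.snd ℝ _ _)) x :=
    ((ContinuousLinearMap.proj i).comp
      (ContinuousLinearMap.snd ℝ (Fin m → ℝ) (Fin m → ℝ))).hasFDerivAt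
  simp [poissonBracket, hπ.fderiv, eQ, eP, Pi.single_apply]

theorem apply_add_smul_eQ_eq_self {m : ℕ} {K : PhaseSpace m → ℝ} (hK : Differentiable ℝ K)
    {i : Fin m} (h : ∀ x : PhaseSpace m, x.2 i = 0 → fderiv ℝ K x (eQ m i) = 0)
    {x : PhaseSpace m} (hx : x.2 i = 0) (s : ℝ) :
    K (x + s • eQ m i) = K x := by
  have hline : ∀ u : ℝ, HasDerivAt (fun u : ℝ => K (x + u • eQ m i)) 0 u := by
    intro u
    have hmove : HasDerivAt (fun u : ℝ => x + u • eQ m i) (eQ m i) u := by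
      simpa using ((hasDerivAt_id u).smul_const (eQ m i)).const_add x
    have hslice : (x + u • eQ m i).2 i = 0 := by simp [eQ, hx]
    have hcomp := (hK _).hasFDerivAt.comp_hasDerivAt u hmove
    rwa [h _ hslice] at hcomp
  simpa using is_const_of_deriv_eq_zero (fun u => (hline u).differentiableAt)
    (fun u => (hline u).deriv) s 0

namespace PhaseSpace

variable {n : ℕ}

def snoc (c : ℝ) (y : PhaseSpace n) : PhaseSpace (n + 1) :=
  (Fin.snoc y.1 c, Fin.snoc y.2 0)

noncomputable def snocLinear (n : ℕ) : PhaseSpace n →L[ℝ] PhaseSpace (n + 1) :=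
  (Fin.snocZeroCLM n).prodMap (Fin.snocZeroCLM n)

noncomputable def init (n : ℕ) : PhaseSpace (n + 1) →L[ℝ] PhaseSpace n :=
  (Fin.initCLM n).prodMap (Fin.initCLM n)

theorem snoc_eq_snocLinear_add (c : ℝ) (y : PhaseSpace n) :
    snoc c y = snocLinear n y + snoc c 0 := by
  ext1 <;> simp [snoc, snocLinear, Fin.snocZeroCLM, Fin.snoc_add_snoc]

theorem hasFDerivAt_snoc (c : ℝ) (y : PhaseSpace n) :
    HasFDerivAt (snoc c) (snocLinear n) y := by
  rw [funext (snoc_eq_snocLinear_add c)]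
  exact (snocLinear n).hasFDerivAt.add_const _

theorem snocLinear_eQ (i : Fin n) : snocLinear n (eQ n i) = eQ (n + 1) i.castSucc := by
  simp [snocLinear, Fin.snocZeroCLM, eQ, Fin.snoc_single_zero, Fin.snoc_zero_zero]

theorem snocLinear_eP (i : Fin n) : snocLinear n (eP n i) = eP (n + 1) i.castSucc := by
  simp [snocLinear, Fin.snocZeroCLM, eP, Fin.snoc_single_zero, Fin.snoc_zero_zero]

theorem snoc_init {x : PhaseSpace (n + 1)} (hx : x.2 (Fin.last n) = 0) :
    snoc (x.1 (Fin.last n)) (init n x) = x := by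
  ext1
  · exact Fin.snoc_init_self x.1
  · conv_rhs => rw [← Fin.snoc_init_self x.2, hx]
    rfl

theorem snoc_eq_snoc_add_smul_eQ (c c' : ℝ) (y : PhaseSpace n) :
    snoc c' y = snoc c y + (c' - c) • eQ (n + 1) (Fin.last n) := by
  ext1
  · funext j
    refine Fin.lastCases ?_ (fun i => ?_) j <;>
      simp [snoc, eQ, (Fin.castSucc_lt_last _).ne]
  · simp [snoc, eQ]

theorem hamVF_comp_snoc {K : PhaseSpace (n + 1) → ℝ} (hK : Differentiable ℝ K) (c : ℝ)
    (y : PhaseSpace n) : hamVF (K ∘ snoc c) y = init n (hamVF K (snoc c y)) := by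
  have hchain : fderiv ℝ (K ∘ snoc c) y = (fderiv ℝ K (snoc c y)).comp (snocLinear n) :=
    ((hK _).hasFDerivAt.comp y (hasFDerivAt_snoc c y)).fderiv
  ext i <;> simp [hamVF, init, Fin.initCLM, hchain, snocLinear_eQ, snocLinear_eP]

theorem comp_snoc_eq_comp_snoc {K : PhaseSpace (n + 1) → ℝ} (hK : Differentiable ℝ K)
    (h : ∀ x : PhaseSpace (n + 1), x.2 (Fin.last n) = 0 →
      fderiv ℝ K x (eQ (n + 1) (Fin.last n)) = 0)
    (c c' : ℝ) : K ∘ snoc c' = K ∘ snoc c := by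
  funext y
  rw [Function.comp_apply, snoc_eq_snoc_add_smul_eQ c c']
  exact apply_add_smul_eQ_eq_self hK h (by simp [snoc]) _

end PhaseSpace

theorem projected_curve_solves_reduced_hamilton_general {n : ℕ}
    (K a : (Fin (n + 1) → ℝ) × (Fin (n + 1) → ℝ) → ℝ)
    (hK : ContDiff ℝ (⊤ : ℕ∞) K)
    (hbracket : ∀ x, poissonBracket (fun y => y.2 (Fin.last n)) K x = a x * x.2 (Fin.last n))
    (t₁ t₂ : ℝ) (γ : ℝ → (Fin (n + 1) → ℝ) × (Fin (n + 1) → ℝ))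
    (hHam : ∀ t ∈ Set.Ioo t₁ t₂, HasDerivAt γ (hamVF K (γ t)) t)
    (hpn : ∀ t ∈ Set.Ioo t₁ t₂, (γ t).2 (Fin.last n) = 0)
    (c : ℝ) :
    ∀ t ∈ Set.Ioo t₁ t₂,
      HasDerivAt
        (fun s => ((fun i : Fin n => (γ s).1 i.castSucc),
                   (fun i : Fin n => (γ s).2 i.castSucc)))
        (hamVF (fun y : (Fin n → ℝ) × (Fin n → ℝ) => K (Fin.snoc y.1 c, Fin.snoc y.2 0))
          ((fun i : Fin n => (γ t).1 i.castSucc), (fun i : Fin n => (γ t).2 i.castSucc))) t := by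
  intro t ht
  have hKdiff : Differentiable ℝ K := hK.differentiable (by simp)
  have hqn : ∀ x : PhaseSpace (n + 1), x.2 (Fin.last n) = 0 →
      fderiv ℝ K x (eQ (n + 1) (Fin.last n)) = 0 := fun x hx => by
    simpa [poissonBracket_momentum_left, hx] using hbracket x
  show HasDerivAt (PhaseSpace.init n ∘ γ)
    (hamVF (K ∘ PhaseSpace.snoc c) (PhaseSpace.init n (γ t))) t
  rw [PhaseSpace.comp_snoc_eq_comp_snoc hKdiff hqn ((γ t).1 (Fin.last n)) c,
    PhaseSpace.hamVF_comp_snoc hKdiff, PhaseSpace.snoc_init (hpn t ht)]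
  exact (PhaseSpace.init n).hasFDerivAt.comp_hasDerivAt t (hHam t ht)

/-- (Hamiltonian symmetry reduction by a particular integral in Darboux
coordinates.) If `{π_n, K} = a·π_n` pointwise for `π_n (q,p) = p_n` (the last momentum
coordinate of `ℝ^{n+1}`), and `γ` solves Hamilton's equations for `K` on an open interval
with `p_n ≡ 0` along the curve, then for any `c` the projected curve solves Hamilton's
equations for the reduced Hamiltonian `K̄(q̄,p̄) = K(q̄, c, p̄, 0)` on `ℝⁿ × ℝⁿ`. -/
theorem projected_curve_solves_reduced_hamilton {n : ℕ}
    (K a : (Fin (n + 1) → ℝ) × (Fin (n + 1) → ℝ) → ℝ)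
    (hK : ContDiff ℝ (⊤ : ℕ∞) K) (ha : ContDiff ℝ (⊤ : ℕ∞) a)
    (hbracket : ∀ x, poissonBracket (fun y => y.2 (Fin.last n)) K x = a x * x.2 (Fin.last n))
    (t₁ t₂ : ℝ) (γ : ℝ → (Fin (n + 1) → ℝ) × (Fin (n + 1) → ℝ))
    (hHam : ∀ t ∈ Set.Ioo t₁ t₂, HasDerivAt γ (hamVF K (γ t)) t)
    (hpn : ∀ t ∈ Set.Ioo t₁ t₂, (γ t).2 (Fin.last n) = 0)
    (c : ℝ) :
    ∀ t ∈ Set.Ioo t₁ t₂,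
      HasDerivAt
        (fun s => ((fun i : Fin n => (γ s).1 i.castSucc),
                   (fun i : Fin n => (γ s).2 i.castSucc)))
        (hamVF (fun y : (Fin n → ℝ) × (Fin n → ℝ) => K (Fin.snoc y.1 c, Fin.snoc y.2 0))
          ((fun i : Fin n => (γ t).1 i.castSucc), (fun i : Fin n => (γ t).2 i.castSucc))) t :=
  projected_curve_solves_reduced_hamilton_general K a hK hbracket t₁ t₂ γ hHam hpn c
end

section
/- (The map f ↦ X_f is a Lie algebra antihomomorphism.) Let f, g : ℝ^n × ℝ^n → ℝ be twice continuously differentiable. Then for every x ∈ ℝ^n × ℝ^n, X_{{f,g}}(x) = −[X_f, X_g](x), where the commutator of two differentiable vector fields X, Y : ℝ^n × ℝ^n → ℝ^n × ℝ^n is [X, Y](x) = DY(x)(X(x)) − DX(x)(Y(x)), with DX(x) the Fréchet derivative of X at x. -/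
open scoped BigOperators

/-! Write `X_f = J (df)`, where `J` is the canonical symplectic identification of covectors with
vectors. Then `{f,g} = df(X_g)` and `DX_f = J ∘ D²f`, so differentiating `{f,g}` gives
`D²f(·, X_g) + df ∘ J ∘ D²g`. Schwarz symmetry of `D²f` turns the first term into `D²f(X_g, ·)`,
whose image under `J` is `DX_f(X_g)`; the antisymmetry `ℓ(J m) = -m(J ℓ)` together with symmetry
of `D²g` turns the second into `-D²g(X_f, ·)`, whose image under `J` is `-DX_g(X_f)`. -/

namespace PhaseSpace

variable {n : ℕ}

local notation "E" => (Fin n → ℝ) × (Fin n → ℝ)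

lemma eq_sum_eQ_eP (u : E) : u = ∑ i, (u.1 i • eQ n i + u.2 i • eP n i) := by
  ext j <;> simp [eQ, eP, Prod.fst_sum, Prod.snd_sum, Finset.sum_apply, Pi.single_apply]

lemma apply_eq_sum_eQ_eP (ℓ : E →L[ℝ] ℝ) (u : E) :
    ℓ u = ∑ i, (u.1 i * ℓ (eQ n i) + u.2 i * ℓ (eP n i)) := by
  conv_lhs => rw [eq_sum_eQ_eP u]
  simp only [map_sum, map_add, map_smul, smul_eq_mul]

variable (n) in
/-- `ω♯`: the covector `ℓ` goes to the vector `X` with `ω(X, ·) = ℓ` for the canonical symplectic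
form `ω = Σᵢ dqⁱ ∧ dpᵢ`. -/
noncomputable def symplecticSharp : (E →L[ℝ] ℝ) →L[ℝ] E :=
  (ContinuousLinearMap.pi fun i => ContinuousLinearMap.apply ℝ ℝ (eP n i)).prod
    (-ContinuousLinearMap.pi fun i => ContinuousLinearMap.apply ℝ ℝ (eQ n i))

lemma hamVF_apply (f : E → ℝ) (x : E) : hamVF f x = symplecticSharp n (fderiv ℝ f x) :=
  rfl

lemma symplecticSharp_antisymm (ℓ m : E →L[ℝ] ℝ) :
    ℓ (symplecticSharp n m) = -m (symplecticSharp n ℓ) := by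
  rw [apply_eq_sum_eQ_eP ℓ, apply_eq_sum_eQ_eP m, ← Finset.sum_neg_distrib]
  refine Finset.sum_congr rfl fun i _ => ?_
  simp only [symplecticSharp, ContinuousLinearMap.prod_apply, ContinuousLinearMap.coe_pi',
    ContinuousLinearMap.apply_apply, neg_apply, Pi.neg_apply]
  ring

lemma comp_symplecticSharp_comp_of_symm (ℓ : E →L[ℝ] ℝ) {B : E →L[ℝ] E →L[ℝ] ℝ}
    (hB : ∀ u v, B u v = B v u) :
    ℓ ∘L symplecticSharp n ∘L B = -B (symplecticSharp n ℓ) := by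
  refine ContinuousLinearMap.ext fun v => ?_
  simp only [ContinuousLinearMap.comp_apply, neg_apply]
  rw [symplecticSharp_antisymm, hB]

lemma poissonBracket_eq_fderiv_apply_hamVF (f g : E → ℝ) :
    poissonBracket f g = fun x => fderiv ℝ f x (hamVF g x) := by
  funext x
  rw [apply_eq_sum_eQ_eP (fderiv ℝ f x), poissonBracket]
  refine Finset.sum_congr rfl fun i _ => ?_
  simp only [hamVF]
  ring

lemma hasFDerivAt_hamVF {f : E → ℝ} {x : E} (hf : DifferentiableAt ℝ (fderiv ℝ f) x) :
    HasFDerivAt (hamVF f) (symplecticSharp n ∘L fderiv ℝ (fderiv ℝ f) x) x :=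
  (symplecticSharp n).hasFDerivAt.comp x hf.hasFDerivAt

lemma hasFDerivAt_poissonBracket {f g : E → ℝ} {x : E}
    (hf : DifferentiableAt ℝ (fderiv ℝ f) x) (hg : DifferentiableAt ℝ (fderiv ℝ g) x) :
    HasFDerivAt (poissonBracket f g)
      (fderiv ℝ f x ∘L symplecticSharp n ∘L fderiv ℝ (fderiv ℝ g) x
        + (fderiv ℝ (fderiv ℝ f) x).flip (hamVF g x)) x := by
  rw [poissonBracket_eq_fderiv_apply_hamVF]
  exact hf.hasFDerivAt.clm_apply (hasFDerivAt_hamVF hg)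

end PhaseSpace

open PhaseSpace in
/-- (The map `f ↦ X_f` is a Lie algebra antihomomorphism.) For `C²`
functions `f, g` on `ℝⁿ × ℝⁿ` one has `X_{{f,g}} = −[X_f, X_g]`, where
`[X,Y](x) = DY(x)(X(x)) − DX(x)(Y(x))`. -/
theorem hamVF_poissonBracket_eq_neg_commutator {n : ℕ}
    (f g : (Fin n → ℝ) × (Fin n → ℝ) → ℝ)
    (hf : ContDiff ℝ 2 f) (hg : ContDiff ℝ 2 g) :
    ∀ x, hamVF (poissonBracket f g) x
      = -(fderiv ℝ (hamVF g) x (hamVF f x) - fderiv ℝ (hamVF f) x (hamVF g x)) := by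
  intro x
  have hf₂ : DifferentiableAt ℝ (fderiv ℝ f) x :=
    (hf.fderiv_right le_rfl).differentiable one_ne_zero x
  have hg₂ : DifferentiableAt ℝ (fderiv ℝ g) x :=
    (hg.fderiv_right le_rfl).differentiable one_ne_zero x
  have symm_f := (hf.contDiffAt (x := x)).isSymmSndFDerivAt (by simp)
  have symm_g := (hg.contDiffAt (x := x)).isSymmSndFDerivAt (by simp)
  have flip_f : (fderiv ℝ (fderiv ℝ f) x).flip (hamVF g x)
      = fderiv ℝ (fderiv ℝ f) x (hamVF g x) :=
    ContinuousLinearMap.ext fun v => symm_f v _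
  rw [hamVF_apply, (hasFDerivAt_poissonBracket hf₂ hg₂).fderiv, (hasFDerivAt_hamVF hf₂).fderiv,
    (hasFDerivAt_hamVF hg₂).fderiv, flip_f, comp_symplecticSharp_comp_of_symm _ symm_g,
    ← hamVF_apply]
  simp only [ContinuousLinearMap.comp_apply, map_add, map_neg]
  abel
end

section
/- (Involutivity of the Hamiltonian vector fields on the common zero set.) Let f₁,…,f_k : ℝ^n × ℝ^n → ℝ be smooth functions with {f_i, f_j} = Σ_{m=1}^k a^{ij}_m f_m pointwise for some smooth functions a^{ij}_m. Then at every point x with f₁(x) = ⋯ = f_k(x) = 0, the commutator [X_{f_i}, X_{f_j}](x) lies in the real linear span of the vectors X_{f₁}(x), …, X_{f_k}(x); specifically [X_{f_i}, X_{f_j}](x) = −Σ_m a^{ij}_m(x) X_{f_m}(x). -/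
/-!
With `J` the symplectic sharp map (`ω(J L, ·) = L`), we have `X_f = J ∘ df` and
`{f, g} = df(X_g)`. Differentiating the latter with the product rule, using `L (J M) = -M (J L)`
and the symmetry of Hessians, gives `d{f, g} = D²f(X_g) - D²g(X_f)`, while
`DX_g(X_f) - DX_f(X_g) = J(D²g(X_f) - D²f(X_g))`. Hence `[X_f, X_g] = -X_{{f,g}}` for all `C²`
functions. Finally, at a common zero of the `fₘ`, the differential of `Σₘ aₘ fₘ` is `Σₘ aₘ dfₘ`,
so `X_{Σ aₘ fₘ} = Σₘ aₘ X_{fₘ}` there.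
-/

open scoped BigOperators

section PhaseSpace

variable {n : ℕ}

lemma apply_eq_sum_eQ_eP (L : ((Fin n → ℝ) × (Fin n → ℝ)) →L[ℝ] ℝ)
    (v : (Fin n → ℝ) × (Fin n → ℝ)) :
    L v = ∑ s, v.1 s * L (eQ n s) + ∑ s, v.2 s * L (eP n s) := by
  have hv : v = ∑ s, v.1 s • eQ n s + ∑ s, v.2 s • eP n s := by
    refine Prod.ext ?_ ?_ <;>
    · funext r
      simp [eQ, eP, Prod.fst_sum, Prod.snd_sum, Finset.sum_apply, Pi.single_apply]
  conv_lhs => rw [hv]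
  simp [map_sum, smul_eq_mul]

variable (n) in
/-- The inverse of `v ↦ ω(v, ·)` for the canonical symplectic form `ω = Σ dqⁱ ∧ dpᵢ`. -/
noncomputable def symplecticSharp :
    (((Fin n → ℝ) × (Fin n → ℝ)) →L[ℝ] ℝ) →L[ℝ] (Fin n → ℝ) × (Fin n → ℝ) :=
  (ContinuousLinearMap.pi fun i => ContinuousLinearMap.apply ℝ ℝ (eP n i)).prod
    (-ContinuousLinearMap.pi fun i => ContinuousLinearMap.apply ℝ ℝ (eQ n i))

lemma hamVF_apply (f : (Fin n → ℝ) × (Fin n → ℝ) → ℝ) (x : (Fin n → ℝ) × (Fin n → ℝ)) :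
    hamVF f x = symplecticSharp n (fderiv ℝ f x) :=
  rfl

lemma apply_symplecticSharp (L M : ((Fin n → ℝ) × (Fin n → ℝ)) →L[ℝ] ℝ) :
    L (symplecticSharp n M) = -M (symplecticSharp n L) := by
  rw [apply_eq_sum_eQ_eP L, apply_eq_sum_eQ_eP M]
  simp only [symplecticSharp, ContinuousLinearMap.prod_apply, ContinuousLinearMap.pi_apply,
    neg_apply, ContinuousLinearMap.apply_apply, Pi.neg_apply, neg_mul, Finset.sum_neg_distrib,
    mul_comm (M _)]
  ring

lemma poissonBracket_eq_apply_hamVF (f g : (Fin n → ℝ) × (Fin n → ℝ) → ℝ) :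
    poissonBracket f g = fun x => fderiv ℝ f x (hamVF g x) := by
  funext x
  rw [apply_eq_sum_eQ_eP (fderiv ℝ f x), poissonBracket, Finset.sum_sub_distrib]
  simp [hamVF, mul_comm, sub_eq_add_neg]

lemma fderiv_hamVF {g : (Fin n → ℝ) × (Fin n → ℝ) → ℝ} {x : (Fin n → ℝ) × (Fin n → ℝ)}
    (hg : DifferentiableAt ℝ (fderiv ℝ g) x) :
    fderiv ℝ (hamVF g) x = (symplecticSharp n).comp (fderiv ℝ (fderiv ℝ g) x) :=
  ((symplecticSharp n).hasFDerivAt.comp x hg.hasFDerivAt).fderiv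

lemma fderiv_poissonBracket_apply {f g : (Fin n → ℝ) × (Fin n → ℝ) → ℝ}
    {x : (Fin n → ℝ) × (Fin n → ℝ)} (hf : ContDiffAt ℝ 2 f x) (hg : ContDiffAt ℝ 2 g x)
    (c : (Fin n → ℝ) × (Fin n → ℝ)) :
    fderiv ℝ (poissonBracket f g) x c
      = fderiv ℝ (fderiv ℝ f) x (hamVF g x) c - fderiv ℝ (fderiv ℝ g) x (hamVF f x) c := by
  have hf' : DifferentiableAt ℝ (fderiv ℝ f) x :=
    (hf.fderiv_right le_rfl).differentiableAt one_ne_zero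
  have hg' : DifferentiableAt ℝ (fderiv ℝ g) x :=
    (hg.fderiv_right le_rfl).differentiableAt one_ne_zero
  have hXg : DifferentiableAt ℝ (hamVF g) x :=
    (symplecticSharp n).differentiableAt.comp x hg'
  rw [poissonBracket_eq_apply_hamVF, fderiv_clm_apply hf' hXg, fderiv_hamVF hg']
  simp only [add_apply, ContinuousLinearMap.comp_apply, ContinuousLinearMap.flip_apply]
  rw [apply_symplecticSharp, (hf.isSymmSndFDerivAt (by simp)).eq,
    (hg.isSymmSndFDerivAt (by simp)).eq, hamVF_apply, hamVF_apply]
  ring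

theorem commutator_hamVF_eq_neg_hamVF_poissonBracket {f g : (Fin n → ℝ) × (Fin n → ℝ) → ℝ}
    {x : (Fin n → ℝ) × (Fin n → ℝ)} (hf : ContDiffAt ℝ 2 f x) (hg : ContDiffAt ℝ 2 g x) :
    fderiv ℝ (hamVF g) x (hamVF f x) - fderiv ℝ (hamVF f) x (hamVF g x)
      = -hamVF (poissonBracket f g) x := by
  rw [fderiv_hamVF ((hf.fderiv_right le_rfl).differentiableAt one_ne_zero),
    fderiv_hamVF ((hg.fderiv_right le_rfl).differentiableAt one_ne_zero)]
  simp only [hamVF_apply, ContinuousLinearMap.comp_apply, ← map_sub, ← map_neg]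
  refine congrArg _ (ContinuousLinearMap.ext fun c => ?_)
  rw [neg_apply, fderiv_poissonBracket_apply hf hg, sub_apply, hamVF_apply, hamVF_apply]
  ring

lemma hamVF_sum_mul_of_forall_eq_zero {k : ℕ} {a f : Fin k → (Fin n → ℝ) × (Fin n → ℝ) → ℝ}
    {x : (Fin n → ℝ) × (Fin n → ℝ)} (ha : ∀ m, DifferentiableAt ℝ (a m) x)
    (hf : ∀ m, DifferentiableAt ℝ (f m) x) (hx : ∀ m, f m x = 0) :
    hamVF (fun y => ∑ m, a m y * f m y) x = ∑ m, a m x • hamVF (f m) x := by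
  have hsum : fderiv ℝ (fun y => ∑ m, a m y * f m y) x = ∑ m, a m x • fderiv ℝ (f m) x := by
    rw [fderiv_fun_sum (A := fun m y => a m y * f m y) fun m _ => (ha m).mul (hf m)]
    refine Finset.sum_congr rfl fun m _ => ?_
    rw [fderiv_fun_mul (ha m) (hf m), hx, zero_smul, add_zero]
  simp only [hamVF_apply, hsum, map_sum, map_smul]

end PhaseSpace

/-- (Involutivity of the Hamiltonian vector fields on the common zero set.)
If `{fᵢ,fⱼ} = Σₘ aᵢⱼₘ fₘ` pointwise, then at every common zero `x` of the `fₘ` the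
commutator `[X_{fᵢ}, X_{fⱼ}](x)` equals `−Σₘ aᵢⱼₘ(x) X_{fₘ}(x)`; in particular it lies in
the real linear span of the vectors `X_{f₁}(x),…,X_{f_k}(x)`. -/
theorem commutator_hamVF_mem_span_on_common_zero {n k : ℕ}
    (f : Fin k → (Fin n → ℝ) × (Fin n → ℝ) → ℝ)
    (a : Fin k → Fin k → Fin k → (Fin n → ℝ) × (Fin n → ℝ) → ℝ)
    (hf : ∀ i, ContDiff ℝ (⊤ : ℕ∞) (f i))
    (ha : ∀ i j m, ContDiff ℝ (⊤ : ℕ∞) (a i j m))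
    (hinv : ∀ i j x, poissonBracket (f i) (f j) x = ∑ m, a i j m x * f m x)
    (i j : Fin k) (x : (Fin n → ℝ) × (Fin n → ℝ)) (hx : ∀ m, f m x = 0) :
    fderiv ℝ (hamVF (f j)) x (hamVF (f i) x) - fderiv ℝ (hamVF (f i)) x (hamVF (f j) x)
        = -∑ m, a i j m x • hamVF (f m) x ∧
    fderiv ℝ (hamVF (f j)) x (hamVF (f i) x) - fderiv ℝ (hamVF (f i)) x (hamVF (f j) x)
        ∈ Submodule.span ℝ (Set.range fun m => hamVF (f m) x) := by
  have hf2 : ∀ m, ContDiffAt ℝ 2 (f m) x := fun m =>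
    (hf m).contDiffAt.of_le (WithTop.coe_le_coe.2 le_top)
  have hbracket : poissonBracket (f i) (f j) = fun y => ∑ m, a i j m y * f m y :=
    funext (hinv i j)
  have hcomm := commutator_hamVF_eq_neg_hamVF_poissonBracket (hf2 i) (hf2 j)
  rw [hbracket, hamVF_sum_mul_of_forall_eq_zero (fun m => (ha i j m).differentiable (by simp) x)
    (fun m => (hf m).differentiable (by simp) x) hx] at hcomm
  refine ⟨hcomm, hcomm ▸ neg_mem (Submodule.sum_mem _ fun m _ =>
    Submodule.smul_mem _ _ (Submodule.subset_span (Set.mem_range_self m)))⟩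
end

section
/- (The relative angular momentum is a particular integral of the two-body Coulomb system in a constant magnetic field.) Fix real constants M > 0, μ > 0, e, e_eff, B. On the phase space ℝ⁴ × ℝ⁴ with position coordinates (R₁, R₂, r₁, r₂) and conjugate momenta (K₁, K₂, p₁, p₂), restricted to r₁² + r₂² > 0, define the Hamiltonian 𝓗 = (K₁² + K₂²)/(2M) + (eB/M)·(K₁ r₂ − K₂ r₁) + (1/(2μ))·[(p₁ + (e_eff B/2)·r₂)² + (p₂ − (e_eff B/2)·r₁)²] + e²B²(r₁² + r₂²)/(2M) − e²/√(r₁² + r₂²), and let ℓ_z = r₁ p₂ − r₂ p₁. Then the canonical Poisson bracket {ℓ_z, 𝓗} vanishes at every point of the phase space where K₁ = 0 and K₂ = 0. -/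
open scoped BigOperators

/-- The planar two-body Coulomb system in a constant perpendicular magnetic field, in
center-of-mass variables. Positions: `x.1 0 = R₁`, `x.1 1 = R₂`, `x.1 2 = r₁`, `x.1 3 = r₂`;
conjugate momenta: `x.2 0 = K₁`, `x.2 1 = K₂`, `x.2 2 = p₁`, `x.2 3 = p₂`. -/
noncomputable def twoBodyCoulombB (M μ e eeff B : ℝ) (x : (Fin 4 → ℝ) × (Fin 4 → ℝ)) : ℝ :=
  ((x.2 0) ^ 2 + (x.2 1) ^ 2) / (2 * M)
    + (e * B / M) * (x.2 0 * x.1 3 - x.2 1 * x.1 2)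
    + (1 / (2 * μ)) * ((x.2 2 + (eeff * B / 2) * x.1 3) ^ 2
        + (x.2 3 - (eeff * B / 2) * x.1 2) ^ 2)
    + e ^ 2 * B ^ 2 * ((x.1 2) ^ 2 + (x.1 3) ^ 2) / (2 * M)
    - e ^ 2 / Real.sqrt ((x.1 2) ^ 2 + (x.1 3) ^ 2)

/-- The `z`-component of the relative angular momentum, `ℓ_z = r₁ p₂ − r₂ p₁`. -/
noncomputable def relAngMom (x : (Fin 4 → ℝ) × (Fin 4 → ℝ)) : ℝ :=
  x.1 2 * x.2 3 - x.1 3 * x.2 2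

/-!
`ℓ_z` generates the simultaneous rotation of the relative position `r` and momentum `p`: its
Hamiltonian vector field is the velocity at `t = 0` of the curve `t ↦ (rotate r and p by t)`.
Since `{f, g}(x) = -dg_x(X_f)`, the bracket `{ℓ_z, 𝓗}` is the derivative of `𝓗` along this
curve. Once `K = 0`, the coupling `(eB/M)(K₁ r₂ - K₂ r₁)` drops out and `𝓗` depends only on
`|r|` and `|p + (e_eff B/2)(r₂, -r₁)|`, both preserved by the rotation, so `𝓗` is constant
along the curve.
-/

open Real

section PoissonBracket

variable {n : ℕ}

theorem hamVF_eq_sum (f : (Fin n → ℝ) × (Fin n → ℝ) → ℝ) (x : (Fin n → ℝ) × (Fin n → ℝ)) :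
    hamVF f x = ∑ i, (fderiv ℝ f x (eP n i) • eQ n i - fderiv ℝ f x (eQ n i) • eP n i) := by
  ext j <;> simp [hamVF, eQ, eP, Prod.fst_sum, Prod.snd_sum, Finset.sum_apply, Pi.single_apply]

theorem poissonBracket_eq_neg_fderiv_hamVF (f g : (Fin n → ℝ) × (Fin n → ℝ) → ℝ)
    (x : (Fin n → ℝ) × (Fin n → ℝ)) :
    poissonBracket f g x = -fderiv ℝ g x (hamVF f x) := by
  rw [hamVF_eq_sum, map_sum, poissonBracket, ← Finset.sum_neg_distrib]
  refine Finset.sum_congr rfl fun i _ => ?_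
  simp only [map_sub, map_smul, smul_eq_mul]
  ring

theorem fderiv_eq_zero_of_hasDerivAt_of_comp_eq {E F : Type*} [NormedAddCommGroup E]
    [NormedSpace ℝ E] [NormedAddCommGroup F] [NormedSpace ℝ F] {g : E → F} {γ : ℝ → E} {x v : E}
    (hγ₀ : γ 0 = x) (hγ : HasDerivAt γ v 0) (hg : DifferentiableAt ℝ g x)
    (hconst : ∀ t, g (γ t) = g x) :
    fderiv ℝ g x v = 0 := by
  rw [← hγ₀] at hg
  have hcomp : HasDerivAt (g ∘ γ) (fderiv ℝ g (γ 0) v) 0 := hg.hasFDerivAt.comp_hasDerivAt 0 hγ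
  rw [show g ∘ γ = fun _ => g x from funext hconst, hγ₀] at hcomp
  exact hcomp.unique (hasDerivAt_const 0 _)

theorem poissonBracket_eq_zero_of_hasDerivAt_hamVF {f g : (Fin n → ℝ) × (Fin n → ℝ) → ℝ}
    {γ : ℝ → (Fin n → ℝ) × (Fin n → ℝ)} {x : (Fin n → ℝ) × (Fin n → ℝ)} (hγ₀ : γ 0 = x)
    (hγ : HasDerivAt γ (hamVF f x) 0) (hg : DifferentiableAt ℝ g x)
    (hconst : ∀ t, g (γ t) = g x) :
    poissonBracket f g x = 0 := by
  rw [poissonBracket_eq_neg_fderiv_hamVF,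
    fderiv_eq_zero_of_hasDerivAt_of_comp_eq hγ₀ hγ hg hconst, neg_zero]

end PoissonBracket

noncomputable def relRotation (t : ℝ) (x : (Fin 4 → ℝ) × (Fin 4 → ℝ)) :
    (Fin 4 → ℝ) × (Fin 4 → ℝ) :=
  (![x.1 0, x.1 1, cos t * x.1 2 - sin t * x.1 3, sin t * x.1 2 + cos t * x.1 3],
   ![x.2 0, x.2 1, cos t * x.2 2 - sin t * x.2 3, sin t * x.2 2 + cos t * x.2 3])

def relRotationGen (x : (Fin 4 → ℝ) × (Fin 4 → ℝ)) : (Fin 4 → ℝ) × (Fin 4 → ℝ) :=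
  (![0, 0, -x.1 3, x.1 2], ![0, 0, -x.2 3, x.2 2])

theorem relRotation_zero (x : (Fin 4 → ℝ) × (Fin 4 → ℝ)) : relRotation 0 x = x := by
  ext i <;> fin_cases i <;> simp [relRotation]

theorem hasDerivAt_cos_mul_sub_sin_mul (a b : ℝ) :
    HasDerivAt (fun t => cos t * a - sin t * b) (-b) 0 := by
  simpa using ((hasDerivAt_cos 0).mul_const a).fun_sub ((hasDerivAt_sin 0).mul_const b)

theorem hasDerivAt_sin_mul_add_cos_mul (a b : ℝ) :
    HasDerivAt (fun t => sin t * a + cos t * b) a 0 := by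
  simpa using ((hasDerivAt_sin 0).mul_const a).fun_add ((hasDerivAt_cos 0).mul_const b)

theorem hasDerivAt_relRotation (x : (Fin 4 → ℝ) × (Fin 4 → ℝ)) :
    HasDerivAt (fun t => relRotation t x) (relRotationGen x) 0 := by
  unfold relRotation relRotationGen
  refine .prodMk (hasDerivAt_pi.2 fun i => ?_) (hasDerivAt_pi.2 fun i => ?_) <;> fin_cases i <;>
    simp [hasDerivAt_const, hasDerivAt_cos_mul_sub_sin_mul, hasDerivAt_sin_mul_add_cos_mul]

theorem fderiv_relAngMom (x v : (Fin 4 → ℝ) × (Fin 4 → ℝ)) :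
    fderiv ℝ relAngMom x v = x.1 2 * v.2 3 + v.1 2 * x.2 3 - (x.1 3 * v.2 2 + v.1 3 * x.2 2) := by
  unfold relAngMom
  simp (disch := fun_prop) only [fderiv_fun_sub, fderiv_fun_mul, fderiv_apply, fderiv.fst,
    fderiv.snd, fderiv_fun_id, ContinuousLinearMap.comp_id, ContinuousLinearMap.comp_apply,
    ContinuousLinearMap.coe_fst', ContinuousLinearMap.coe_snd', ContinuousLinearMap.proj_apply,
    sub_apply, add_apply, smul_apply, smul_eq_mul]
  ring

theorem hamVF_relAngMom (x : (Fin 4 → ℝ) × (Fin 4 → ℝ)) :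
    hamVF relAngMom x = relRotationGen x := by
  ext i <;> fin_cases i <;> simp [hamVF, relRotationGen, fderiv_relAngMom, eQ, eP]

theorem rotate_sq_add_sq (t u v : ℝ) :
    (cos t * u - sin t * v) ^ 2 + (sin t * u + cos t * v) ^ 2 = u ^ 2 + v ^ 2 := by
  linear_combination (u ^ 2 + v ^ 2) * sin_sq_add_cos_sq t

theorem twoBodyCoulombB_relRotation (M μ e eeff B t : ℝ) {x : (Fin 4 → ℝ) × (Fin 4 → ℝ)}
    (hK₁ : x.2 0 = 0) (hK₂ : x.2 1 = 0) :
    twoBodyCoulombB M μ e eeff B (relRotation t x) = twoBodyCoulombB M μ e eeff B x := by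
  have hkin₁ : cos t * x.2 2 - sin t * x.2 3 + eeff * B / 2 * (sin t * x.1 2 + cos t * x.1 3)
      = cos t * (x.2 2 + eeff * B / 2 * x.1 3) - sin t * (x.2 3 - eeff * B / 2 * x.1 2) := by
    ring
  have hkin₂ : sin t * x.2 2 + cos t * x.2 3 - eeff * B / 2 * (cos t * x.1 2 - sin t * x.1 3)
      = sin t * (x.2 2 + eeff * B / 2 * x.1 3) + cos t * (x.2 3 - eeff * B / 2 * x.1 2) := by
    ring
  simp only [twoBodyCoulombB, relRotation, Matrix.cons_val, hK₁, hK₂, hkin₁, hkin₂,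
    rotate_sq_add_sq, zero_mul, sub_self]

theorem differentiableAt_twoBodyCoulombB (M μ e eeff B : ℝ) {x : (Fin 4 → ℝ) × (Fin 4 → ℝ)}
    (hx : 0 < x.1 2 ^ 2 + x.1 3 ^ 2) : DifferentiableAt ℝ (twoBodyCoulombB M μ e eeff B) x := by
  have hsqrt : DifferentiableAt ℝ
      (fun y : (Fin 4 → ℝ) × (Fin 4 → ℝ) => √(y.1 2 ^ 2 + y.1 3 ^ 2)) x :=
    DifferentiableAt.sqrt (by fun_prop) hx.ne'
  have hsqrt_ne : √(x.1 2 ^ 2 + x.1 3 ^ 2) ≠ 0 := (sqrt_pos.2 hx).ne'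
  unfold twoBodyCoulombB
  fun_prop (disch := assumption)

theorem relAngMom_particular_integral_general
    (M μ e eeff B : ℝ) :
    ∀ x : (Fin 4 → ℝ) × (Fin 4 → ℝ),
      0 < (x.1 2) ^ 2 + (x.1 3) ^ 2 → x.2 0 = 0 → x.2 1 = 0 →
      poissonBracket relAngMom (twoBodyCoulombB M μ e eeff B) x = 0 := by
  intro x hr hK₁ hK₂
  refine poissonBracket_eq_zero_of_hasDerivAt_hamVF (γ := (relRotation · x)) (relRotation_zero x)
    ?_ (differentiableAt_twoBodyCoulombB M μ e eeff B hr)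
    fun t => twoBodyCoulombB_relRotation M μ e eeff B t hK₁ hK₂
  rw [hamVF_relAngMom]
  exact hasDerivAt_relRotation x

/-- (The relative angular momentum is a particular integral of the two-body
Coulomb system in a constant magnetic field.) The canonical Poisson bracket `{ℓ_z, 𝓗}`
vanishes at every point of phase space with `r₁² + r₂² > 0` where the pseudomomentum
vanishes: `K₁ = K₂ = 0`. -/
theorem relAngMom_particular_integral
    (M μ e eeff B : ℝ) (hM : 0 < M) (hμ : 0 < μ) :
    ∀ x : (Fin 4 → ℝ) × (Fin 4 → ℝ),
      0 < (x.1 2) ^ 2 + (x.1 3) ^ 2 → x.2 0 = 0 → x.2 1 = 0 →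
      poissonBracket relAngMom (twoBodyCoulombB M μ e eeff B) x = 0 :=
  relAngMom_particular_integral_general M μ e eeff B
end

section
/- (Kinetic energy in the ρ-representation of the N-body system.) Let N ≥ 2, d ≥ 1, masses m₁,…,m_N > 0, points r₁,…,r_N ∈ ℝ^d, and real numbers p_{ij} for 1 ≤ i ≠ j ≤ N with p_{ij} = p_{ji}. Set ρ_{ij} = |r_i − r_j|² and define P_i = 2 Σ_{j ≠ i} p_{ij}(r_i − r_j) ∈ ℝ^d. Then Σ_{i=1}^N |P_i|²/(2m_i) = 2 Σ_{i<j} ((m_i + m_j)/(m_i m_j)) ρ_{ij} p_{ij}² + Σ_{i=1}^N Σ_{j<k, j≠i, k≠i} (2/m_i)(ρ_{ij} + ρ_{ik} − ρ_{jk}) p_{ij} p_{ik}. -/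
open scoped BigOperators

lemma sum_erase_pair {α : Type*} [DecidableEq α] [LinearOrder α]
    (s : Finset α) (H : α → α → ℝ) :
    ∑ j ∈ s, ∑ k ∈ s.erase j, H j k
      = ∑ j ∈ s, ∑ k ∈ s.filter (fun k => j < k), (H j k + H k j) := by
  have step1 : ∑ j ∈ s, ∑ k ∈ s.erase j, H j k
      = ∑ j ∈ s, ∑ k ∈ s, ((if j < k then H j k else 0) + (if k < j then H j k else 0)) := by
    refine Finset.sum_congr rfl fun j hj => ?_
    rw [← Finset.filter_ne', Finset.sum_filter]
    refine Finset.sum_congr rfl fun k hk => ?_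
    rcases lt_trichotomy j k with h | h | h
    · simp [h, h.ne', not_lt_of_gt h]
    · simp [h]
    · simp [h, h.ne, not_lt_of_gt h]
  rw [step1]
  rw [Finset.sum_congr rfl fun j _ => Finset.sum_add_distrib, Finset.sum_add_distrib]
  have step2 : ∑ j ∈ s, ∑ k ∈ s, (if k < j then H j k else 0)
      = ∑ j ∈ s, ∑ k ∈ s, (if j < k then H k j else 0) := Finset.sum_comm
  rw [step2, ← Finset.sum_add_distrib]
  refine Finset.sum_congr rfl fun j hj => ?_
  rw [← Finset.sum_add_distrib, Finset.sum_filter]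
  refine Finset.sum_congr rfl fun k hk => ?_
  by_cases h : j < k <;> simp [h]

/-- (Kinetic energy in the ρ-representation of the N-body system.) With
`ρ_{ij} = |r_i − r_j|²`, symmetric momenta `p_{ij}`, and induced particle momenta
`P_i = 2 Σ_{j≠i} p_{ij} (r_i − r_j)`, the kinetic energy `Σᵢ |P_i|²/(2mᵢ)` equals the kinetic
part of the reduced Hamiltonian `𝓗_ρ`. -/
theorem kinetic_energy_rho_representation
    (N d : ℕ) (hN : 2 ≤ N) (m : Fin N → ℝ) (hm : ∀ i, 0 < m i)
    (r : Fin N → Fin d → ℝ) (p : Fin N → Fin N → ℝ) (hsym : ∀ i j, p i j = p j i) :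
    (∑ i, (∑ a, (2 * ∑ j ∈ Finset.univ.erase i, p i j * (r i a - r j a)) ^ 2) / (2 * m i))
      = 2 * (∑ i, ∑ j ∈ Finset.univ.filter (fun j => i < j),
            ((m i + m j) / (m i * m j)) * (∑ a, (r i a - r j a) ^ 2) * p i j ^ 2)
        + ∑ i, ∑ j ∈ Finset.univ.filter (fun j => j ≠ i),
            ∑ k ∈ Finset.univ.filter (fun k => j < k ∧ k ≠ i),
              (2 / m i) * ((∑ a, (r i a - r j a) ^ 2) + (∑ a, (r i a - r k a) ^ 2)
                  - (∑ a, (r j a - r k a) ^ 2)) * p i j * p i k := by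
  -- A i j k : the basic bilinear block
  set A : Fin N → Fin N → Fin N → ℝ :=
    fun i j k => (2 / m i) * (p i j * p i k * ∑ a, (r i a - r j a) * (r i a - r k a)) with hA
  -- Step A: rewrite LHS
  have key : ∀ i : Fin N,
      (∑ a, (2 * ∑ j ∈ Finset.univ.erase i, p i j * (r i a - r j a)) ^ 2) / (2 * m i)
        = ∑ j ∈ Finset.univ.erase i, ∑ k ∈ Finset.univ.erase i, A i j k := by
    intro i
    have hmi : (m i) ≠ 0 := (hm i).ne'
    have expand : (∑ a, (2 * ∑ j ∈ Finset.univ.erase i, p i j * (r i a - r j a)) ^ 2)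
        = 4 * ∑ j ∈ Finset.univ.erase i, ∑ k ∈ Finset.univ.erase i,
            (p i j * p i k * ∑ a, (r i a - r j a) * (r i a - r k a)) := by
      have e1 : ∀ a : Fin d,
          (2 * ∑ j ∈ Finset.univ.erase i, p i j * (r i a - r j a)) ^ 2
            = 4 * ∑ j ∈ Finset.univ.erase i, ∑ k ∈ Finset.univ.erase i,
                (p i j * (r i a - r j a)) * (p i k * (r i a - r k a)) := by
        intro a
        rw [← Finset.sum_mul_sum]
        ring
      rw [Finset.sum_congr rfl fun a _ => e1 a, ← Finset.mul_sum]
      congr 1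
      rw [Finset.sum_comm]
      refine Finset.sum_congr rfl fun j _ => ?_
      rw [Finset.sum_comm]
      refine Finset.sum_congr rfl fun k _ => ?_
      rw [Finset.mul_sum]
      exact Finset.sum_congr rfl fun a _ => by ring
    rw [expand, hA]
    rw [Finset.sum_congr rfl fun j _ => (Finset.mul_sum _ _ _).symm, ← Finset.mul_sum]
    field_simp
    ring
  rw [Finset.sum_congr rfl fun i _ => key i]
  -- Step B: split diagonal
  have split : ∀ i : Fin N, ∀ j ∈ Finset.univ.erase i,
      ∑ k ∈ Finset.univ.erase i, A i j k
        = A i j j + ∑ k ∈ (Finset.univ.erase i).erase j, A i j k := by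
    intro i j hj
    rw [← Finset.add_sum_erase _ _ hj]
  rw [Finset.sum_congr rfl fun i _ => Finset.sum_congr rfl (split i)]
  rw [Finset.sum_congr rfl fun i _ => Finset.sum_add_distrib, Finset.sum_add_distrib]
  congr 1
  -- diagonal part = first RHS term
  · rw [sum_erase_pair Finset.univ (fun i j => A i j j), Finset.mul_sum]
    refine Finset.sum_congr rfl fun i _ => ?_
    rw [Finset.mul_sum]
    refine Finset.sum_congr rfl fun j hj => ?_
    have hmi : (m i) ≠ 0 := (hm i).ne'
    have hmj : (m j) ≠ 0 := (hm j).ne'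
    have hr : (∑ a, (r j a - r i a) * (r j a - r i a)) = ∑ a, (r i a - r j a) ^ 2 :=
      Finset.sum_congr rfl fun a _ => by ring
    have hr2 : (∑ a, (r i a - r j a) * (r i a - r j a)) = ∑ a, (r i a - r j a) ^ 2 :=
      Finset.sum_congr rfl fun a _ => by ring
    rw [hA]
    simp only [hr, hr2, hsym j i]
    field_simp
    ring
  -- off-diagonal part = second RHS term
  · refine Finset.sum_congr rfl fun i _ => ?_
    rw [sum_erase_pair (Finset.univ.erase i) (fun j k => A i j k)]
    have hset : Finset.univ.erase i = Finset.univ.filter (fun j : Fin N => j ≠ i) := by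
      ext x; simp
    rw [hset]
    refine Finset.sum_congr rfl fun j hj => ?_
    have hset2 : (Finset.univ.filter (fun j : Fin N => j ≠ i)).filter (fun k => j < k)
        = Finset.univ.filter (fun k : Fin N => j < k ∧ k ≠ i) := by
      ext x; simp; tauto
    rw [hset2]
    refine Finset.sum_congr rfl fun k hk => ?_
    have hcross : (∑ a, (r i a - r j a) ^ 2) + (∑ a, (r i a - r k a) ^ 2)
        - (∑ a, (r j a - r k a) ^ 2)
        = 2 * ∑ a, (r i a - r j a) * (r i a - r k a) := by
      rw [← Finset.sum_add_distrib, ← Finset.sum_sub_distrib, Finset.mul_sum]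
      exact Finset.sum_congr rfl fun a _ => by ring
    have hAsym : (∑ a, (r i a - r k a) * (r i a - r j a))
        = ∑ a, (r i a - r j a) * (r i a - r k a) :=
      Finset.sum_congr rfl fun a _ => by ring
    rw [hA]
    simp only [hAsym]
    rw [hcross]
    ring
end

section
/- (Kinetic energy in the volume-variable representation for N = 4 with unit masses.) Let r₁, r₂, r₃, r₄ ∈ ℝ³ and set ρ_{ij} = |r_i − r_j|² for 1 ≤ i < j ≤ 4. Define the volume variables 𝓥₁ = Σ_{i<j} ρ_{ij}; 𝓥₂ = (1/16)·Σ over the four triangles {i,j,k} ⊂ {1,2,3,4} of (2ρ_{ij}ρ_{ik} + 2ρ_{ij}ρ_{jk} + 2ρ_{ik}ρ_{jk} − ρ_{ij}² − ρ_{ik}² − ρ_{jk}²); and 𝓥₃ = (1/144)·[ρ₂₃ρ₃₄ρ₁₂ + ρ₂₄ρ₃₄ρ₁₂ + ρ₁₄ρ₂₃ρ₁₂ + ρ₁₃ρ₂₄ρ₁₂ + ρ₁₃ρ₃₄ρ₁₂ + ρ₁₄ρ₃₄ρ₁₂ + ρ₁₃ρ₁₄ρ₂₃ + ρ₁₃ρ₁₄ρ₂₄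 + ρ₁₃ρ₂₃ρ₂₄ + ρ₁₄ρ₂₃ρ₂₄ + ρ₁₄ρ₂₃ρ₃₄ + ρ₁₃ρ₂₄ρ₃₄ − ρ₁₄ρ₂₃² − ρ₁₃ρ₂₄² − ρ₁₄²ρ₂₃ − ρ₃₄ρ₁₂² − ρ₃₄²ρ₁₂ − ρ₁₃²ρ₂₄ − ρ₁₃ρ₁₄ρ₃₄ − ρ₂₃ρ₂₄ρ₃₄ − ρ₁₃ρ₂₃ρ₁₂ − ρ₁₄ρ₂₄ρ₁₂]. For real numbers P₁, P₂, P₃ set p_{ij} = (∂𝓥₁/∂ρ_{ij})P₁ + (∂𝓥₂/∂ρ_{ij})P₂ + (∂𝓥₃/∂ρ_{ij})P₃ (partial derivatives of the above polynomials). Then 4 Σ_{i<j} ρ_{ij} p_{ij}² + Σ_{i=1}^4 Σ_{j<k, j≠i, k≠i} 2(ρ_{ij} + ρ_{ik} − ρ_{jk}) p_{ij} p_{ik} = 8𝓥₁P₁² + (1/2)(𝓥₁𝓥₂ + 108𝓥₃)P₂² + (2/9)𝓥₂𝓥₃P₃² + 32𝓥₂P₁P₂ + 48𝓥₃P₁P₃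 + 2𝓥₁𝓥₃P₂P₃. -/
open scoped BigOperators

/-- (Kinetic energy in the volume-variable representation for `N = 4` with
unit masses.) For four points in `ℝ³` with squared mutual distances `ρ_{ij}`, volume
variables `𝓥₁, 𝓥₂, 𝓥₃` of the tetrahedron of interaction, and the substitution
`p_{ij} = (∂𝓥₁/∂ρ_{ij})P₁ + (∂𝓥₂/∂ρ_{ij})P₂ + (∂𝓥₃/∂ρ_{ij})P₃` (partial derivatives of the
defining polynomials written out explicitly), the kinetic part of `𝓗_ρ` equals
`8𝓥₁P₁² + (1/2)(𝓥₁𝓥₂ + 108𝓥₃)P₂² + (2/9)𝓥₂𝓥₃P₃² + 32𝓥₂P₁P₂ + 48𝓥₃P₁P₃ + 2𝓥₁𝓥₃P₂P₃`. -/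
theorem kinetic_energy_volume_representation_four_body
    (r1 r2 r3 r4 : Fin 3 → ℝ)
    (ρ12 ρ13 ρ14 ρ23 ρ24 ρ34 : ℝ)
    (hρ12 : ρ12 = ∑ a, (r1 a - r2 a) ^ 2)
    (hρ13 : ρ13 = ∑ a, (r1 a - r3 a) ^ 2)
    (hρ14 : ρ14 = ∑ a, (r1 a - r4 a) ^ 2)
    (hρ23 : ρ23 = ∑ a, (r2 a - r3 a) ^ 2)
    (hρ24 : ρ24 = ∑ a, (r2 a - r4 a) ^ 2)
    (hρ34 : ρ34 = ∑ a, (r3 a - r4 a) ^ 2)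
    (V1 V2 V3 : ℝ)
    (hV1 : V1 = ρ12 + ρ13 + ρ14 + ρ23 + ρ24 + ρ34)
    (hV2 : V2 = (1 / 16) *
      ((2 * ρ12 * ρ13 + 2 * ρ12 * ρ23 + 2 * ρ13 * ρ23 - ρ12 ^ 2 - ρ13 ^ 2 - ρ23 ^ 2)
       + (2 * ρ12 * ρ14 + 2 * ρ12 * ρ24 + 2 * ρ14 * ρ24 - ρ12 ^ 2 - ρ14 ^ 2 - ρ24 ^ 2)
       + (2 * ρ13 * ρ14 + 2 * ρ13 * ρ34 + 2 * ρ14 * ρ34 - ρ13 ^ 2 - ρ14 ^ 2 - ρ34 ^ 2)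
       + (2 * ρ23 * ρ24 + 2 * ρ23 * ρ34 + 2 * ρ24 * ρ34 - ρ23 ^ 2 - ρ24 ^ 2 - ρ34 ^ 2)))
    (hV3 : V3 = (1 / 144) *
      (ρ23 * ρ34 * ρ12 + ρ24 * ρ34 * ρ12 + ρ14 * ρ23 * ρ12 + ρ13 * ρ24 * ρ12
       + ρ13 * ρ34 * ρ12 + ρ14 * ρ34 * ρ12
       + ρ13 * ρ14 * ρ23 + ρ13 * ρ14 * ρ24 + ρ13 * ρ23 * ρ24 + ρ14 * ρ23 * ρ24
       + ρ14 * ρ23 * ρ34 + ρ13 * ρ24 * ρ34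
       - ρ14 * ρ23 ^ 2 - ρ13 * ρ24 ^ 2 - ρ14 ^ 2 * ρ23 - ρ34 * ρ12 ^ 2 - ρ34 ^ 2 * ρ12
       - ρ13 ^ 2 * ρ24
       - ρ13 * ρ14 * ρ34 - ρ23 * ρ24 * ρ34 - ρ13 * ρ23 * ρ12 - ρ14 * ρ24 * ρ12))
    (P1 P2 P3 : ℝ) (p12 p13 p14 p23 p24 p34 : ℝ)
    (hp12 : p12 = P1 + (1 / 8) * (ρ13 + ρ23 + ρ14 + ρ24 - 2 * ρ12) * P2
      + (1 / 144) * (ρ23 * ρ34 + ρ24 * ρ34 + ρ14 * ρ23 + ρ13 * ρ24 + ρ13 * ρ34 + ρ14 * ρ34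
          - 2 * ρ12 * ρ34 - ρ34 ^ 2 - ρ13 * ρ23 - ρ14 * ρ24) * P3)
    (hp13 : p13 = P1 + (1 / 8) * (ρ12 + ρ23 + ρ14 + ρ34 - 2 * ρ13) * P2
      + (1 / 144) * (ρ24 * ρ12 + ρ34 * ρ12 + ρ14 * ρ23 + ρ14 * ρ24 + ρ23 * ρ24 + ρ24 * ρ34
          - ρ24 ^ 2 - 2 * ρ13 * ρ24 - ρ14 * ρ34 - ρ23 * ρ12) * P3)
    (hp14 : p14 = P1 + (1 / 8) * (ρ12 + ρ24 + ρ13 + ρ34 - 2 * ρ14) * P2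
      + (1 / 144) * (ρ23 * ρ12 + ρ34 * ρ12 + ρ13 * ρ23 + ρ13 * ρ24 + ρ23 * ρ24 + ρ23 * ρ34
          - ρ23 ^ 2 - 2 * ρ14 * ρ23 - ρ13 * ρ34 - ρ24 * ρ12) * P3)
    (hp23 : p23 = P1 + (1 / 8) * (ρ12 + ρ13 + ρ24 + ρ34 - 2 * ρ23) * P2
      + (1 / 144) * (ρ34 * ρ12 + ρ14 * ρ12 + ρ13 * ρ14 + ρ13 * ρ24 + ρ14 * ρ24 + ρ14 * ρ34
          - 2 * ρ14 * ρ23 - ρ14 ^ 2 - ρ24 * ρ34 - ρ13 * ρ12) * P3)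
    (hp24 : p24 = P1 + (1 / 8) * (ρ12 + ρ14 + ρ23 + ρ34 - 2 * ρ24) * P2
      + (1 / 144) * (ρ34 * ρ12 + ρ13 * ρ12 + ρ13 * ρ14 + ρ13 * ρ23 + ρ14 * ρ23 + ρ13 * ρ34
          - 2 * ρ13 * ρ24 - ρ13 ^ 2 - ρ23 * ρ34 - ρ14 * ρ12) * P3)
    (hp34 : p34 = P1 + (1 / 8) * (ρ13 + ρ14 + ρ23 + ρ24 - 2 * ρ34) * P2
      + (1 / 144) * (ρ23 * ρ12 + ρ24 * ρ12 + ρ13 * ρ12 + ρ14 * ρ12 + ρ14 * ρ23 + ρ13 * ρ24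
          - ρ12 ^ 2 - 2 * ρ34 * ρ12 - ρ13 * ρ14 - ρ23 * ρ24) * P3) :
    4 * (ρ12 * p12 ^ 2 + ρ13 * p13 ^ 2 + ρ14 * p14 ^ 2
          + ρ23 * p23 ^ 2 + ρ24 * p24 ^ 2 + ρ34 * p34 ^ 2)
      + 2 * (ρ12 + ρ13 - ρ23) * p12 * p13 + 2 * (ρ12 + ρ14 - ρ24) * p12 * p14
      + 2 * (ρ13 + ρ14 - ρ34) * p13 * p14
      + 2 * (ρ12 + ρ23 - ρ13) * p12 * p23 + 2 * (ρ12 + ρ24 - ρ14) * p12 * p24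
      + 2 * (ρ23 + ρ24 - ρ34) * p23 * p24
      + 2 * (ρ13 + ρ23 - ρ12) * p13 * p23 + 2 * (ρ13 + ρ34 - ρ14) * p13 * p34
      + 2 * (ρ23 + ρ34 - ρ24) * p23 * p34
      + 2 * (ρ14 + ρ24 - ρ12) * p14 * p24 + 2 * (ρ14 + ρ34 - ρ13) * p14 * p34
      + 2 * (ρ24 + ρ34 - ρ23) * p24 * p34
      = 8 * V1 * P1 ^ 2 + (1 / 2) * (V1 * V2 + 108 * V3) * P2 ^ 2
        + (2 / 9) * V2 * V3 * P3 ^ 2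
        + 32 * V2 * P1 * P2 + 48 * V3 * P1 * P3 + 2 * V1 * V3 * P2 * P3 := by
  subst hp12 hp13 hp14 hp23 hp24 hp34 hV1 hV2 hV3
  ring
end
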